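/- arXiv:2405.01747 — 2 statements merged into one kernel-verified Lean document; each statement's English description precedes it below -/
import Mathlib

section
/- For k ≥ 1 and positive integers r_1, ..., r_k, the number of sequences over a k-letter alphabet consisting of exactly r_i blocks of letter i (for each i) with no two adjacent blocks of the same letter equals F(r) = ∑_{p_1=1}^{r_1} ... ∑_{p_k=1}^{r_k} (-1)^{∑_i (r_i - p_i)} * C(r_1 - 1, p_1 - 1) * ... * C(r_k - 1, p_k - 1) * (p_1 + ... + p_k)! / (p_1! ... p_k!). -/
/-!
Collapsing every maximal block of equal letters of a word to a single letter (`List.destutter`)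
sends a word with letter counts `r` to a Smirnov word (no two equal adjacent letters) with counts
`p ≤ r`. The word is recovered from this block sequence by choosing, for each letter `a`, the
lengths of its `p a` blocks: a composition of `r a` into `p a` positive parts, of which there are
`C(r a - 1, p a - 1)`. Counting all words with counts `r` in this way gives
`multinomial r = ∑_{1 ≤ p ≤ r} ∏_a C(r a - 1, p a - 1) · S(p)`, with `S(p)` the number of Smirnov
words with counts `p`. The stated formula inverts this triangular system, because
`∑_p (-1)^(r - p) C(r - 1, p - 1) C(p - 1, q - 1)` is the Kronecker delta `[q = r]`.
-/

open Finset Function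
open scoped Nat

namespace List

variable {α : Type*}

theorem head?_destutter' (R : α → α → Prop) [DecidableRel R] (l : List α) (a : α) :
    (l.destutter' R a).head? = some a := by
  induction l generalizing a with
  | nil => simp [destutter'_nil]
  | cons b l ih => rw [destutter'_cons]; split_ifs <;> simp [ih]

theorem head?_destutter (R : α → α → Prop) [DecidableRel R] (l : List α) :
    (l.destutter R).head? = l.head? := by
  cases l with
  | nil => rfl
  | cons a l => rw [destutter_cons', head?_destutter', head?_cons]

theorem eq_of_replicate_append_eq {a : α} {s s' : ℕ} {v v' : List α} (hv : v.head? ≠ some a)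
    (hv' : v'.head? ≠ some a) (h : replicate s a ++ v = replicate s' a ++ v') :
    s = s' ∧ v = v' := by
  induction s generalizing s' with
  | zero => cases s' <;> simp_all [replicate_succ]
  | succ s ih =>
    cases s' with
    | zero =>
      subst h
      simp [replicate_succ] at hv'
    | succ s' => simpa using ih (by simpa [replicate_succ] using h)

variable [DecidableEq α] {a : α} {v : List α}

theorem destutter'_ne_replicate_append (s : ℕ) (hv : v.head? ≠ some a) :
    (replicate s a ++ v).destutter' (· ≠ ·) a = a :: v.destutter (· ≠ ·) := by
  induction s with
  | zero =>
    cases v with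
    | nil => rfl
    | cons c t =>
      rw [replicate_zero, nil_append, destutter'_cons_pos _ (Ne.symm (by simpa using hv)),
        destutter_cons']
  | succ s ih => rwa [replicate_succ, cons_append, destutter'_cons_neg _ (by simp)]

theorem destutter_ne_replicate_append {s : ℕ} (hs : s ≠ 0) (hv : v.head? ≠ some a) :
    (replicate s a ++ v).destutter (· ≠ ·) = a :: v.destutter (· ≠ ·) := by
  obtain ⟨s, rfl⟩ := Nat.exists_eq_succ_of_ne_zero hs
  rw [replicate_succ, cons_append, destutter_cons', destutter'_ne_replicate_append s hv]

theorem exists_eq_replicate_append (a : α) (w : List α) :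
    ∃ s v, v.head? ≠ some a ∧ w = replicate s a ++ v := by
  induction w with
  | nil => exact ⟨0, [], by simp, rfl⟩
  | cons x w ih =>
    by_cases hx : x = a
    · obtain ⟨s, v, hv, rfl⟩ := ih
      exact ⟨s + 1, v, hv, by simp [hx, replicate_succ]⟩
    · exact ⟨0, x :: w, by simpa using hx, rfl⟩

theorem destutter_ne_eq_cons_iff {w b : List α} :
    w.destutter (· ≠ ·) = a :: b ↔
      ∃ s v, s ≠ 0 ∧ v.head? ≠ some a ∧ v.destutter (· ≠ ·) = b ∧ w = replicate s a ++ v := by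
  constructor
  · intro h
    obtain ⟨s, v, hv, rfl⟩ := exists_eq_replicate_append a w
    have hs : s ≠ 0 := by
      rintro rfl
      exact hv (by simpa [head?_destutter] using congrArg head? h)
    rw [destutter_ne_replicate_append hs hv, cons.injEq] at h
    exact ⟨s, v, hs, hv, h.2, rfl⟩
  · rintro ⟨s, v, hs, hv, rfl, rfl⟩
    exact destutter_ne_replicate_append hs hv

theorem forall_count_replicate_append_eq_iff {s : ℕ} {r : α → ℕ} :
    (∀ i, (replicate s a ++ v).count i = r i) ↔
      s ≤ r a ∧ ∀ i, v.count i = update r a (r a - s) i := by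
  simp only [count_append, count_replicate, beq_iff_eq]
  constructor
  · intro h
    refine ⟨by simpa using le_self_add.trans (h a).le, fun i => ?_⟩
    have := h i
    rcases eq_or_ne i a with rfl | hi
    · simp only [if_true, update_self] at this ⊢
      omega
    · simpa [hi, Ne.symm hi] using this
  · rintro ⟨hs, h⟩ i
    have := h i
    rcases eq_or_ne i a with rfl | hi
    · simp only [if_true, update_self] at this ⊢
      omega
    · simpa [hi, Ne.symm hi] using this

end List

-- The compositions of `n` into `c` positive parts, counted by the remainder `t` left after the
-- first part.
def compositionCount : ℕ → ℕ → ℕ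
  | n, 0 => if n = 0 then 1 else 0
  | n, c + 1 => ∑ t ∈ range n, compositionCount t c

theorem compositionCount_succ_succ (n c : ℕ) : compositionCount (n + 1) (c + 1) = n.choose c := by
  induction n generalizing c with
  | zero => cases c <;> simp [compositionCount]
  | succ n ih =>
    rw [compositionCount, sum_range_succ, ← compositionCount, ih]
    cases c with
    | zero => simp [compositionCount]
    | succ c => rw [ih, Nat.choose_succ_succ' n c, add_comm]

section Words

variable {α : Type*} [Fintype α] [DecidableEq α]

theorem List.sum_count_eq_length (l : List α) : ∑ a, l.count a = l.length := by
  simpa using Multiset.sum_count_eq_card (s := univ) (m := (l : Multiset α)) (by simp)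

def words (r : α → ℕ) : Finset (List α) :=
  ((univ : Finset (List.Vector α (∑ a, r a))).map
    ⟨List.Vector.toList, List.Vector.toList_injective⟩).filter fun l => ∀ a, l.count a = r a

theorem mem_words {r : α → ℕ} {l : List α} : l ∈ words r ↔ ∀ a, l.count a = r a := by
  simp only [words, Finset.mem_filter, Finset.mem_map, mem_univ, true_and, Embedding.coeFn_mk,
    and_iff_right_iff_imp]
  intro h
  exact ⟨⟨l, by rw [← l.sum_count_eq_length]; exact sum_congr rfl fun a _ => h a⟩, rfl⟩

theorem length_eq_of_mem_words {r : α → ℕ} {l : List α} (hl : l ∈ words r) :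
    l.length = ∑ a, r a := by
  rw [← l.sum_count_eq_length]
  exact sum_congr rfl fun a _ => mem_words.1 hl a

theorem sum_update_pred_add_one {f : α → ℕ} {a : α} (ha : f a ≠ 0) :
    ∑ i, update f a (f a - 1) i + 1 = ∑ i, f i := by
  rw [sum_update_of_mem (mem_univ a), Fintype.sum_eq_add_sum_compl a f]
  change _ + ∑ i ∈ {a}ᶜ, f i + 1 = _
  omega

theorem Nat.multinomial_eq_sum_update {f : α → ℕ} {n : ℕ} (hf : ∑ a, f a = n + 1) :
    Nat.multinomial univ f = ∑ a with f a ≠ 0, Nat.multinomial univ (update f a (f a - 1)) := by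
  have hprod : ∀ a, f a ≠ 0 → ∏ i, (f i)! = f a * ∏ i, (update f a (f a - 1) i)! := by
    intro a ha
    simp_rw [apply_update (fun _ => Nat.factorial), prod_update_of_mem (mem_univ a),
      Fintype.prod_eq_mul_prod_compl a, ← mul_assoc, Nat.mul_factorial_pred ha]
    rfl
  have hsum : ∀ a, f a ≠ 0 → ∑ i, update f a (f a - 1) i = n := fun a ha => by
    have := sum_update_pred_add_one ha
    omega
  refine Nat.eq_of_mul_eq_mul_left (prod_pos fun i (_ : i ∈ univ) => Nat.factorial_pos (f i)) ?_
  rw [Nat.multinomial_spec, hf, mul_sum]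
  calc (n + 1)! = ∑ a with f a ≠ 0, f a * n ! := by
        rw [sum_filter_of_ne fun a _ h => left_ne_zero_of_mul h, ← sum_mul, hf, Nat.factorial_succ]
    _ = _ := sum_congr rfl fun a ha => by
        rw [Finset.mem_filter] at ha
        rw [hprod a ha.2, mul_assoc, Nat.multinomial_spec, hsum a ha.2]

theorem nil_mem_words_iff {r : α → ℕ} : [] ∈ words r ↔ ∀ a, r a = 0 := by
  simp [mem_words, eq_comm]

theorem filter_head?_words_eq_map {r : α → ℕ} {a : α} (ha : r a ≠ 0) :
    {w ∈ words r | w.head? = some a} =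
      (words (update r a (r a - 1))).map ⟨List.cons a, List.cons_injective⟩ := by
  ext w
  cases w with
  | nil => simp
  | cons x t =>
    have := List.forall_count_replicate_append_eq_iff (s := 1) (a := a) (v := t) (r := r)
    simp only [Finset.mem_filter, Finset.mem_map, mem_words, List.head?_cons, Option.some.injEq,
      Embedding.coeFn_mk, List.cons.injEq]
    constructor
    · rintro ⟨h, rfl⟩
      exact ⟨t, ((this.1 h).2), rfl, rfl⟩
    · rintro ⟨t, h, rfl, rfl⟩
      exact ⟨this.2 ⟨Nat.one_le_iff_ne_zero.2 ha, h⟩, rfl⟩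

theorem card_words (r : α → ℕ) : #(words r) = Nat.multinomial univ r := by
  induction h : ∑ a, r a generalizing r with
  | zero =>
    have hr : r = 0 := funext <| by simpa using h
    have hw : words r = {[]} := eq_singleton_iff_unique_mem.2 ⟨nil_mem_words_iff.2 (by simp [hr]),
      fun w hw => List.eq_nil_of_length_eq_zero ((length_eq_of_mem_words hw).trans h)⟩
    rw [hw, card_singleton, hr]
    simp [Nat.multinomial]
  | succ n ih =>
    have hnone : {w ∈ words r | w.head? = none} = ∅ :=
      filter_eq_empty_iff.2 fun w hw => by simp [← List.length_pos_iff, length_eq_of_mem_words hw, h]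
    have hsome : ∀ a, #{w ∈ words r | w.head? = some a} ≠ 0 → r a ≠ 0 := by
      intro a ha
      obtain ⟨w, hw⟩ := Finset.card_ne_zero.1 ha
      obtain ⟨hw, hhead⟩ := Finset.mem_filter.1 hw
      rw [← mem_words.1 hw a, ← Nat.pos_iff_ne_zero, List.count_pos_iff]
      exact List.mem_of_mem_head? hhead
    rw [card_eq_sum_card_fiberwise (f := List.head?) (t := univ) (by simp), Fintype.sum_option,
      hnone, card_empty, zero_add, Nat.multinomial_eq_sum_update h,
      ← sum_filter_of_ne (p := (r · ≠ 0)) fun a _ => hsome a]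
    refine sum_congr rfl fun a ha => ?_
    rw [filter_head?_words_eq_map (Finset.mem_filter.1 ha).2, card_map, ih]
    have := sum_update_pred_add_one (Finset.mem_filter.1 ha).2
    omega

-- `List.destutter (· ≠ ·)` collapses each maximal block of equal letters to one letter, so `b` is
-- the block sequence of the words in `blockFiber r b`.
def blockFiber (r : α → ℕ) (b : List α) : Finset (List α) :=
  {w ∈ words r | w.destutter (· ≠ ·) = b}

-- A word over `a :: b` is a first block of `r a - t` letters `a` followed by a word over `b` in
-- which `t` letters `a` are left.
theorem card_blockFiber_cons {r : α → ℕ} {a : α} {b : List α} (hb : b.head? ≠ some a) :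
    #(blockFiber r (a :: b)) = ∑ t ∈ range (r a), #(blockFiber (update r a t) b) := by
  have hhead : ∀ v : List α, v.destutter (· ≠ ·) = b → v.head? ≠ some a := fun v hv => by
    rwa [← List.head?_destutter (· ≠ ·), hv]
  rw [← card_sigma]
  symm
  refine card_nbij (fun x => List.replicate (r a - x.1) a ++ x.2) ?_ ?_ ?_
  · rintro ⟨t, v⟩ hv
    simp only [coe_sigma, Set.mem_sigma_iff, mem_coe, mem_range, blockFiber, Finset.mem_filter,
      mem_words] at hv ⊢
    obtain ⟨ht, hvr, hvb⟩ := hv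
    refine ⟨List.forall_count_replicate_append_eq_iff.2 ⟨Nat.sub_le _ _, ?_⟩,
      List.destutter_ne_eq_cons_iff.2 ⟨_, v, by omega, hhead v hvb, hvb, rfl⟩⟩
    rwa [Nat.sub_sub_self ht.le]
  · rintro ⟨t, v⟩ hv ⟨t', v'⟩ hv' h
    simp only [coe_sigma, Set.mem_sigma_iff, mem_coe, mem_range, blockFiber,
      Finset.mem_filter] at hv hv'
    obtain ⟨hs, rfl⟩ :=
      List.eq_of_replicate_append_eq (hhead v hv.2.2) (hhead v' hv'.2.2) h
    obtain rfl : t = t' := by dsimp only at hs; omega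
    rfl
  · intro w hw
    simp only [blockFiber, coe_filter, Set.mem_ofPred_eq, mem_words] at hw
    obtain ⟨hwr, hwb⟩ := hw
    obtain ⟨s, v, hs, hva, hvb, rfl⟩ := List.destutter_ne_eq_cons_iff.1 hwb
    obtain ⟨hsr, hvr⟩ := List.forall_count_replicate_append_eq_iff.1 hwr
    refine ⟨⟨r a - s, v⟩, ?_, by simp [Nat.sub_sub_self hsr]⟩
    simp only [coe_sigma, Set.mem_sigma_iff, mem_coe, mem_range, blockFiber, Finset.mem_filter,
      mem_words]
    exact ⟨by omega, hvr, hvb⟩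

theorem card_blockFiber {b : List α} (hb : b.IsChain (· ≠ ·)) (r : α → ℕ) :
    #(blockFiber r b) = ∏ a, compositionCount (r a) (b.count a) := by
  induction b generalizing r with
  | nil =>
    simp only [List.count_nil, compositionCount, prod_boole, mem_univ, true_implies]
    have : blockFiber r [] = if ∀ a, r a = 0 then {[]} else ∅ := by
      ext w
      simp only [blockFiber, Finset.mem_filter, List.destutter_eq_nil]
      split_ifs with h
      · simp only [Finset.mem_singleton, and_iff_right_iff_imp]
        rintro rfl
        exact nil_mem_words_iff.2 h
      · simp only [Finset.notMem_empty, iff_false, not_and]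
        rintro hw rfl
        exact h (nil_mem_words_iff.1 hw)
    rw [this, apply_ite card, card_singleton, card_empty]
  | cons a b ih =>
    obtain ⟨hab, hb⟩ := List.isChain_cons.1 hb
    rw [card_blockFiber_cons fun h => hab a h rfl]
    simp_rw [ih hb, apply_update (fun i x => compositionCount x (b.count i)),
      prod_update_of_mem (mem_univ a), ← sum_mul, Fintype.prod_eq_mul_prod_compl a,
      List.count_cons_self, compositionCount, compl_eq_univ_sdiff]
    congr 1
    exact prod_congr rfl fun i hi => by
      rw [List.count_cons_of_ne (by simpa [eq_comm] using hi)]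

def smirnovWords (r : α → ℕ) : Finset (List α) :=
  {w ∈ words r | w.IsChain (· ≠ ·)}

theorem card_words_eq_sum_card_smirnovWords {r : α → ℕ} (hr : ∀ a, 0 < r a) :
    #(words r) = ∑ p ∈ Fintype.piFinset fun a => Icc 1 (r a),
      (∏ a, (r a - 1).choose (p a - 1)) * #(smirnovWords p) := by
  set counts := Fintype.piFinset fun a => range (r a + 1)
  have hmaps : Set.MapsTo (List.destutter (· ≠ ·))
      (words r : Set (List α)) (counts.biUnion smirnovWords : Set (List α)) := by
    intro w hw
    simp only [counts, mem_coe, mem_biUnion, Fintype.mem_piFinset, mem_range, Nat.lt_succ_iff,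
      smirnovWords, Finset.mem_filter, mem_words]
    refine ⟨fun a => (w.destutter (· ≠ ·)).count a, fun a => ?_, fun a => rfl,
      List.isChain_destutter _ w⟩
    exact ((List.destutter_sublist _ w).count_le a).trans (mem_words.1 hw a).le
  have hdisj : (counts : Set (α → ℕ)).PairwiseDisjoint smirnovWords := by
    intro p _ q _ hpq
    refine Finset.disjoint_left.2 fun b hp hq => hpq (funext fun a => ?_)
    simp only [smirnovWords, Finset.mem_filter, mem_words] at hp hq
    rw [← hp.1 a, hq.1 a]
  have hvanish : ∀ p ∈ counts, p ∉ Fintype.piFinset (fun a => Icc 1 (r a)) →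
      (∏ a, compositionCount (r a) (p a)) * #(smirnovWords p) = 0 := by
    intro p hp hp1
    simp only [counts, Fintype.mem_piFinset, mem_range, mem_Icc, not_forall] at hp hp1
    obtain ⟨a, ha⟩ := hp1
    have : p a = 0 := by have := hp a; omega
    rw [prod_eq_zero (mem_univ a) (by simp [this, compositionCount, (hr a).ne']), zero_mul]
  calc #(words r) = ∑ b ∈ counts.biUnion smirnovWords, #(blockFiber r b) :=
        card_eq_sum_card_fiberwise hmaps
    _ = ∑ p ∈ counts, ∑ b ∈ smirnovWords p, #(blockFiber r b) := sum_biUnion hdisj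
    _ = ∑ p ∈ counts, (∏ a, compositionCount (r a) (p a)) * #(smirnovWords p) := by
        refine sum_congr rfl fun p _ => ?_
        rw [mul_comm, ← smul_eq_mul, ← sum_const]
        refine sum_congr rfl fun b hb => ?_
        simp only [smirnovWords, Finset.mem_filter, mem_words] at hb
        simp only [card_blockFiber hb.2, hb.1]
    _ = ∑ p ∈ Fintype.piFinset fun a => Icc 1 (r a),
          (∏ a, compositionCount (r a) (p a)) * #(smirnovWords p) := by
        refine (sum_subset (fun p hp => ?_) hvanish).symm
        simp only [counts, Fintype.mem_piFinset, mem_range, mem_Icc] at hp ⊢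
        exact fun a => by have := hp a; omega
    _ = _ := by
        refine sum_congr rfl fun p hp => congrArg (· * _) (prod_congr rfl fun a _ => ?_)
        have hpa := Fintype.mem_piFinset.1 hp a
        rw [mem_Icc] at hpa
        have := compositionCount_succ_succ (r a - 1) (p a - 1)
        rwa [Nat.sub_add_cancel (hr a), Nat.sub_add_cancel hpa.1] at this

theorem sum_range_neg_one_pow_mul_choose_mul_choose (R Q : ℕ) :
    ∑ j ∈ range (R + 1), (-1 : ℤ) ^ (R - j) * R.choose j * j.choose Q = if Q = R then 1 else 0 := by
  rcases lt_or_ge R Q with h | h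
  · rw [if_neg h.ne', sum_eq_zero fun j hj => ?_]
    rw [Nat.choose_eq_zero_of_lt (n := j) (by rw [mem_range] at hj; omega), Nat.cast_zero,
      mul_zero]
  obtain ⟨N, rfl⟩ := Nat.exists_eq_add_of_le h
  have hlow : ∑ j ∈ range Q, (-1 : ℤ) ^ (Q + N - j) * (Q + N).choose j * j.choose Q = 0 :=
    sum_eq_zero fun j hj => by
      rw [Nat.choose_eq_zero_of_lt (mem_range.1 hj), Nat.cast_zero, mul_zero]
  -- `hhigh` puts the terms in the shape of the binomial expansion of `(1 + (-1)) ^ N`.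
  have hhigh : ∀ m ∈ range (N + 1), (-1 : ℤ) ^ (Q + N - (Q + m)) * (Q + N).choose (Q + m) *
      (Q + m).choose Q = (Q + N).choose Q * ((1 : ℤ) ^ m * (-1) ^ (N - m) * N.choose m) := by
    intro m _
    have := Nat.choose_mul (n := Q + N) (k := Q + m) (s := Q) (by omega)
    simp only [Nat.add_sub_cancel_left] at this
    rw [Nat.add_sub_add_left, mul_assoc, ← Nat.cast_mul, this, one_pow, one_mul]
    push_cast
    ring
  rw [show Q + N + 1 = Q + (N + 1) by ring, sum_range_add, hlow, zero_add, sum_congr rfl hhigh,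
    ← mul_sum, ← add_pow, add_neg_cancel, zero_pow_eq]
  rcases Nat.eq_zero_or_pos N with rfl | hN
  · simp
  · simp [hN.ne']

theorem sum_Icc_neg_one_pow_mul_choose_mul_choose (r : ℕ) {q : ℕ} (hq : q ≠ 0) :
    ∑ p ∈ Icc 1 r, (-1 : ℤ) ^ (r - p) * (r - 1).choose (p - 1) * (p - 1).choose (q - 1) =
      if q = r then 1 else 0 := by
  cases r with
  | zero => simp [hq]
  | succ R =>
    obtain ⟨Q, rfl⟩ := Nat.exists_eq_add_one_of_ne_zero hq
    simp only [← Ico_add_one_right_eq_Icc, sum_Ico_eq_sum_range, Nat.add_sub_cancel,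
      Nat.add_right_cancel_iff, ← sum_range_neg_one_pow_mul_choose_mul_choose R Q]
    refine sum_congr rfl fun j _ => ?_
    rw [add_comm 1 j, Nat.add_sub_add_right, Nat.add_sub_cancel]

theorem sum_piFinset_neg_one_pow_mul_prod_choose_mul_prod_choose (r : α → ℕ) {q : α → ℕ}
    (hq : ∀ a, q a ≠ 0) :
    ∑ p ∈ Fintype.piFinset fun a => Icc 1 (r a), (-1 : ℤ) ^ (∑ a, (r a - p a)) *
      (∏ a, ((r a - 1).choose (p a - 1) : ℤ)) * ∏ a, ((p a - 1).choose (q a - 1) : ℤ) =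
        if q = r then 1 else 0 := by
  simp_rw [← prod_pow_eq_pow_sum, ← prod_mul_distrib]
  rw [← prod_univ_sum (fun a => Icc 1 (r a)) fun a p =>
    (-1 : ℤ) ^ (r a - p) * ((r a - 1).choose (p - 1) : ℤ) * ((p - 1).choose (q a - 1) : ℤ)]
  simp_rw [sum_Icc_neg_one_pow_mul_choose_mul_choose _ (hq _), prod_boole, mem_univ, true_implies,
    funext_iff]

theorem eq_sum_neg_one_pow_of_eq_sum_choose {f g : (α → ℕ) → ℤ} {r : α → ℕ} (hr : ∀ a, 0 < r a)
    (hg : ∀ p ∈ Fintype.piFinset fun a => Icc 1 (r a),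
      g p = ∑ q ∈ Fintype.piFinset fun a => Icc 1 (p a),
        (∏ a, ((p a - 1).choose (q a - 1) : ℤ)) * f q) :
    f r = ∑ p ∈ Fintype.piFinset fun a => Icc 1 (r a), (-1 : ℤ) ^ (∑ a, (r a - p a)) *
      (∏ a, ((r a - 1).choose (p a - 1) : ℤ)) * g p := by
  set box := fun s : α → ℕ => Fintype.piFinset fun a => Icc 1 (s a)
  have hext : ∀ p ∈ box r, g p = ∑ q ∈ box r, (∏ a, ((p a - 1).choose (q a - 1) : ℤ)) * f q := by
    intro p hp
    rw [hg p hp]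
    refine sum_subset (fun q hq => ?_) fun q hqr hqp => ?_
    · simp only [box, Fintype.mem_piFinset, mem_Icc] at hp hq ⊢
      exact fun a => ⟨(hq a).1, (hq a).2.trans (hp a).2⟩
    · simp only [box, Fintype.mem_piFinset, mem_Icc, not_forall] at hp hqr hqp
      obtain ⟨a, ha⟩ := hqp
      rw [prod_eq_zero (mem_univ a), zero_mul]
      rw [Nat.choose_eq_zero_of_lt (by have := hqr a; have := hp a; omega), Nat.cast_zero]
  have hr_mem : r ∈ box r := by simp [box, Nat.one_le_iff_ne_zero, (hr _).ne']
  calc f r = ∑ q ∈ box r, (if q = r then 1 else 0) * f q := by simp [hr_mem]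
    _ = ∑ q ∈ box r, (∑ p ∈ box r, (-1 : ℤ) ^ (∑ a, (r a - p a)) *
          (∏ a, ((r a - 1).choose (p a - 1) : ℤ)) * ∏ a, ((p a - 1).choose (q a - 1) : ℤ)) *
            f q := by
        refine sum_congr rfl fun q hq => ?_
        rw [sum_piFinset_neg_one_pow_mul_prod_choose_mul_prod_choose r fun a => ?_]
        have := (Fintype.mem_piFinset.1 hq a)
        rw [mem_Icc] at this
        omega
    _ = ∑ p ∈ box r, (-1 : ℤ) ^ (∑ a, (r a - p a)) * (∏ a, ((r a - 1).choose (p a - 1) : ℤ)) *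
          ∑ q ∈ box r, (∏ a, ((p a - 1).choose (q a - 1) : ℤ)) * f q := by
        simp_rw [sum_mul, mul_sum]
        rw [sum_comm]
        refine sum_congr rfl fun p _ => sum_congr rfl fun q _ => ?_
        ring
    _ = _ := sum_congr rfl fun p hp => by rw [hext p hp]

-- The `Fintype` instance is a binder so that the lemma applies whichever decidability instances
-- the subtype was elaborated with.
theorem card_vector_smirnov_eq_card_smirnovWords (r : α → ℕ)
    [Fintype {w : List.Vector α (∑ a, r a) //
      (∀ a, w.toList.count a = r a) ∧ w.toList.IsChain (· ≠ ·)}] :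
    Fintype.card {w : List.Vector α (∑ a, r a) //
      (∀ a, w.toList.count a = r a) ∧ w.toList.IsChain (· ≠ ·)} = #(smirnovWords r) := by
  rw [Fintype.card_subtype, smirnovWords, words, filter_filter, filter_map, card_map]
  rfl

end Words

theorem stmt_10_general (k : ℕ) (r : Fin k → ℕ) (hr : ∀ i, 0 < r i) :
    (Fintype.card {w : List.Vector (Fin k) (∑ i, r i) //
        (∀ i, w.toList.count i = r i) ∧ w.toList.IsChain (· ≠ ·)} : ℤ) =
      ∑ p ∈ Fintype.piFinset fun i => Finset.Icc 1 (r i),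
        (-1 : ℤ) ^ (∑ i, (r i - p i)) *
          (∏ i, ((r i - 1).choose (p i - 1) : ℤ)) *
          (Nat.multinomial Finset.univ p : ℤ) := by
  rw [card_vector_smirnov_eq_card_smirnovWords]
  refine eq_sum_neg_one_pow_of_eq_sum_choose (f := fun p => (#(smirnovWords p) : ℤ)) hr
    fun p hp => ?_
  have hp : ∀ i, 0 < p i := fun i => (mem_Icc.1 (Fintype.mem_piFinset.1 hp i)).1
  rw [← card_words, card_words_eq_sum_card_smirnovWords hp]
  push_cast
  rfl

/-- For `k ≥ 1` and positive integers `r 0, …, r (k-1)`, the number of words over a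
`k`-letter alphabet with exactly `r i` occurrences of letter `i` and no two adjacent
letters equal (i.e. valid interleavings of `r i` blocks of each letter `i`) equals
`∑_{p_i=1}^{r_i} (-1)^{∑ (r_i - p_i)} ∏_i C(r_i - 1, p_i - 1) · (∑ p_i)! / ∏ p_i!`. -/
theorem stmt_10 (k : ℕ) (hk : 0 < k) (r : Fin k → ℕ) (hr : ∀ i, 0 < r i) :
    (Fintype.card {w : List.Vector (Fin k) (∑ i, r i) //
        (∀ i, w.toList.count i = r i) ∧ w.toList.IsChain (· ≠ ·)} : ℤ) =
      ∑ p ∈ Fintype.piFinset fun i => Finset.Icc 1 (r i),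
        (-1 : ℤ) ^ (∑ i, (r i - p i)) *
          (∏ i, ((r i - 1).choose (p i - 1) : ℤ)) *
          (Nat.multinomial Finset.univ p : ℤ) :=
  stmt_10_general k r hr
end

section
/- Let h_m(n, q, r) denote the number of compositions of n into r positive parts with at most m parts exceeding q (q ≥ 1). Then ∑_{r=1}^{n} (-1)^r * C(r - 1, p - 1) * h_m(n, q, r) = ∑_{j=⌈(n-p)/(q+1)⌉}^{⌊(n-p)/q⌋} (-1)^{n + m + q*j + j} * C(j - 1, m) * C(n - q*j - 1, p - 1) * C(p, n - q*j - j), with the j = 0 term (when p = n) interpreted via (-1)^j C(j-1, m)|_{j=0} = (-1)^m. -/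
/-- The compositions of `n` into `r` positive parts, as a `Finset` of tuples. -/
def compositions (n r : ℕ) : Finset (Fin r → ℕ) :=
  (Fintype.piFinset fun _ => Finset.range (n + 1)).filter
    fun c => (∀ i, 0 < c i) ∧ ∑ i, c i = n

/-- `hm n q r m` is the number of compositions of `n` into `r` positive parts with at most
`m` parts exceeding `q`. -/
def hm (n q r m : ℕ) : ℕ :=
  ((compositions n r).filter
    fun c => (Finset.univ.filter fun i => q < c i).card ≤ m).card

/-- Integer-valued binomial coefficient with the convention `C(a, b) = 0` when `b < 0`
or `b > a`. -/
def chZ (a b : ℤ) : ℤ := if 0 ≤ b ∧ b ≤ a then (a.toNat.choose b.toNat : ℤ) else 0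


/-!
Mark every part exceeding `q` by a variable `t`: with `P = ∑_{a ≥ 1} t^[a > q] X^a`, the
coefficient of `X^n t^k` in `P^r` counts the compositions of `n` into `r` parts with exactly `k`
parts exceeding `q`, so `h_m(n, q, r)` is the sum of the coefficients of `t^0, …, t^m` of
`[X^n] P^r`. Substituting `z = -P` into the binomial series `∑_r C(r-1, p-1) z^r = (z / (1 - z))^p`
turns the left-hand side into `[X^n] (-P / (1 + P))^p`. As `(1 - X)(1 + P) = 1 - u X^(q+1)` with
`u = 1 - t`, we have `-P / (1 + P) = -X (1 - u X^q) / (1 - u X^(q+1))`, and the coefficient of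
`X^n` in its `p`-th power is `∑ (-1)^(p+i) C(p, i) C(p-1+M, p-1) u^(i+M)` over
`p + q i + (q+1) M = n`. Finally the coefficients of `t^0, …, t^m` of `(1 - t)^j` add up to
`(-1)^m C(j-1, m)` (to `1` if `j = 0`), and `j = i + M` is the summation index of the right-hand
side.
-/

open Finset

section lowCoeffSum

open Polynomial

theorem coeff_one_sub_X_pow (J k : ℕ) :
    ((1 - X : ℤ[X]) ^ J).coeff k = (-1) ^ k * (J.choose k : ℤ) := by
  rw [sub_eq_neg_add, add_pow, finsetSum_coeff]
  have hterm (i : ℕ) : (-X : ℤ[X]) ^ i * 1 ^ (J - i) * (J.choose i : ℤ[X]) =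
      C ((-1) ^ i * (J.choose i : ℤ)) * X ^ i := by
    rw [neg_pow]
    simp only [one_pow, mul_one, map_mul, map_pow, map_neg, map_one, map_natCast]
    ring
  simp only [hterm, coeff_C_mul_X_pow, sum_ite_eq, mem_range]
  split_ifs with h
  · rfl
  · rw [Nat.choose_eq_zero_of_lt (by omega), Nat.cast_zero, mul_zero]

noncomputable def lowCoeffSum (m : ℕ) : ℤ[X] →ₗ[ℤ] ℤ :=
  ∑ k ∈ range (m + 1), lcoeff ℤ k

theorem lowCoeffSum_apply (m : ℕ) (f : ℤ[X]) :
    lowCoeffSum m f = ∑ k ∈ range (m + 1), f.coeff k := by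
  simp [lowCoeffSum]

theorem lowCoeffSum_C_mul (m : ℕ) (a : ℤ) (f : ℤ[X]) :
    lowCoeffSum m (C a * f) = a * lowCoeffSum m f := by
  simp [lowCoeffSum_apply, mul_sum]

theorem lowCoeffSum_X_pow (m k : ℕ) :
    lowCoeffSum m (X ^ k) = if k ≤ m then 1 else 0 := by
  simp [lowCoeffSum_apply, coeff_X_pow]

theorem lowCoeffSum_one_sub_X_pow (m J : ℕ) :
    lowCoeffSum m ((1 - X) ^ J) = if J = 0 then 1 else (-1) ^ m * ((J - 1).choose m : ℤ) := by
  simp only [lowCoeffSum_apply, coeff_one_sub_X_pow]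
  cases J with
  | zero => simp [sum_range_succ']
  | succ J => simp [Int.alternating_sum_range_choose_eq_choose]

end lowCoeffSum

open PowerSeries

theorem mem_compositions {n r : ℕ} {c : Fin r → ℕ} :
    c ∈ compositions n r ↔ (∀ i, 0 < c i) ∧ ∑ i, c i = n := by
  simp only [compositions, mem_filter, Fintype.mem_piFinset, mem_range, and_iff_right_iff_imp]
  rintro ⟨-, rfl⟩ i
  exact Nat.lt_succ_of_le (single_le_sum (fun _ _ => Nat.zero_le _) (mem_univ i))

theorem coeff_pow_eq_sum_compositions {R : Type*} [CommSemiring R] {φ : R⟦X⟧}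
    (hφ : constantCoeff φ = 0) (n r : ℕ) :
    coeff n (φ ^ r) = ∑ c ∈ compositions n r, ∏ i, coeff (c i) φ := by
  have hfun : ∑ l ∈ finsuppAntidiag univ n, ∏ i, coeff (l i) φ =
      ∑ c ∈ piAntidiag univ n, ∏ i, coeff (c i) φ :=
    sum_equiv (Finsupp.equivFunOnFinite (α := Fin r)) (by simp) (fun _ _ => rfl)
  rw [← Fin.prod_const, coeff_prod, hfun]
  refine (sum_subset (fun c hc => ?_) fun c _ hc => ?_).symm
  · simpa using (mem_compositions.mp hc).2
  · obtain ⟨i, hi⟩ : ∃ i, c i = 0 := by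
      by_contra! h
      exact hc (mem_compositions.mpr ⟨fun i => Nat.pos_of_ne_zero (h i), by simp_all⟩)
    exact prod_eq_zero (mem_univ i) (by rw [hi, coeff_zero_eq_constantCoeff_apply, hφ])

theorem coeff_pow_eq_zero_of_lt {S : Type*} [CommSemiring S] {f : S⟦X⟧}
    (hf : constantCoeff f = 0) {n r : ℕ} (h : n < r) : coeff n (f ^ r) = 0 :=
  X_pow_dvd_iff.mp (pow_dvd_pow_of_dvd (X_dvd_iff.mpr hf) r) n h

section binomialSeries

variable {S : Type*} [CommRing S]

theorem coeff_X_pow_mul_invOneSubPow {p : ℕ} (hp : 1 ≤ p) {d : ℕ} (hd : 1 ≤ d) :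
    coeff d (X ^ p * (invOneSubPow S p).val) = ((d - 1).choose (p - 1) : S) := by
  rw [coeff_X_pow_mul', invOneSubPow_val_eq_mk_sub_one_add_choose_of_pos S p hp, coeff_mk]
  split_ifs with h
  · congr 2
    omega
  · rw [Nat.choose_eq_zero_of_lt (by omega), Nat.cast_zero]

/-- Substitute `f` into `X^p (1 - X)⁻ᵖ = ∑_r C(r-1, p-1) X^r`; the terms with `r > n` do not reach
degree `n`. -/
theorem sum_choose_mul_coeff_pow {f W : S⟦X⟧} (hf : constantCoeff f = 0) {p : ℕ} (hp : 1 ≤ p)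
    (hW : (1 - f) ^ p * W = 1) (n : ℕ) :
    ∑ r ∈ Icc 1 n, ((r - 1).choose (p - 1) : S) * coeff n (f ^ r) = coeff n (f ^ p * W) := by
  have hs : HasSubst f := HasSubst.of_constantCoeff_zero' hf
  set σ := substAlgHom (R := S) hs
  have hσX : σ X = f := by rw [coe_substAlgHom, subst_X hs]
  have hinv : σ (invOneSubPow S p).val = W := by
    have h := congrArg σ (invOneSubPow S p).inv_val
    rw [invOneSubPow_inv_eq_one_sub_pow, map_mul, map_pow, map_sub, map_one, hσX] at h
    rw [← one_mul (σ _), ← hW, mul_comm _ W, mul_assoc, h, mul_one]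
  have hσ : σ (X ^ p * (invOneSubPow S p).val) = f ^ p * W := by
    rw [map_mul, map_pow, hσX, hinv]
  rw [← hσ, coe_substAlgHom, coeff_subst' hs, finsum_eq_sum_of_support_subset (s := Icc 1 n)]
  · refine sum_congr rfl fun d hd => ?_
    rw [coeff_X_pow_mul_invOneSubPow hp (mem_Icc.mp hd).1, smul_eq_mul]
  · intro d hd
    rw [Function.mem_support] at hd
    rw [coe_Icc, Set.mem_Icc]
    refine ⟨Nat.one_le_iff_ne_zero.mpr fun h0 => hd ?_, not_lt.mp fun hn => hd ?_⟩
    · rw [h0, coeff_X_pow_mul', if_neg (by omega), zero_smul]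
    · rw [coeff_pow_eq_zero_of_lt hf hn, smul_zero]

end binomialSeries

section invOneSubPowExpand

variable {R : Type*} [CommRing R] (q : ℕ) (u : R)

/-- `(1 - u X^(q+1))⁻ᵖ`. -/
noncomputable def invOneSubPowExpand (p : ℕ) : R⟦X⟧ :=
  expand (q + 1) q.succ_ne_zero (rescale u (invOneSubPow R p).val)

theorem one_sub_C_mul_X_pow_pow_mul_invOneSubPowExpand (p : ℕ) :
    (1 - C u * X ^ (q + 1)) ^ p * invOneSubPowExpand q u p = 1 := by
  have h := congrArg (fun φ => expand (q + 1) q.succ_ne_zero (rescale u φ))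
    (invOneSubPow R p).inv_val
  simp only [invOneSubPow_inv_eq_one_sub_pow, map_mul, map_pow, map_sub, map_one, rescale_X,
    expand_X, expand_C] at h
  exact h

theorem coeff_invOneSubPowExpand {p : ℕ} (hp : 1 ≤ p) (a : ℕ) :
    coeff a (invOneSubPowExpand q u p) =
      if q + 1 ∣ a then u ^ (a / (q + 1)) * ((p - 1 + a / (q + 1)).choose (p - 1) : R) else 0 := by
  rw [invOneSubPowExpand, coeff_expand, coeff_rescale,
    invOneSubPow_val_eq_mk_sub_one_add_choose_of_pos R p hp, coeff_mk]

theorem one_sub_C_mul_X_pow_pow (p : ℕ) :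
    (1 - C u * X ^ q : R⟦X⟧) ^ p =
      ∑ i ∈ range (p + 1), C ((-u) ^ i * p.choose i) * X ^ (q * i) := by
  rw [sub_eq_neg_add, ← neg_mul, ← map_neg, add_pow]
  refine sum_congr rfl fun i _ => ?_
  rw [one_pow, mul_one, mul_pow, ← map_pow, ← pow_mul, map_mul, map_natCast]
  ring

theorem coeff_X_pow_mul_one_sub_pow_mul_invOneSubPowExpand {p : ℕ} (hp : 1 ≤ p) (n : ℕ) :
    coeff n (X ^ p * ((1 - C u * X ^ q) ^ p * invOneSubPowExpand q u p)) =
      ∑ i ∈ range (p + 1), if p + q * i ≤ n ∧ q + 1 ∣ n - p - q * i then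
        (-1) ^ i * p.choose i * u ^ (i + (n - p - q * i) / (q + 1)) *
          ((p - 1 + (n - p - q * i) / (q + 1)).choose (p - 1) : R)
      else 0 := by
  rw [one_sub_C_mul_X_pow_pow, sum_mul, mul_sum, map_sum]
  refine sum_congr rfl fun i _ => ?_
  rw [mul_left_comm, mul_assoc, coeff_C_mul, ← mul_assoc, ← pow_add, add_comm (q * i) p,
    coeff_X_pow_mul', coeff_invOneSubPowExpand q u hp, Nat.sub_sub, ite_and]
  split_ifs
  · rw [neg_pow, pow_add]
    ring
  all_goals rw [mul_zero]

end invOneSubPowExpand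

/-- A single part, marked by `t` when it exceeds `q`. -/
noncomputable def partSeries {R : Type*} [CommSemiring R] (q : ℕ) (t : R) : R⟦X⟧ :=
  mk fun a => if a = 0 then 0 else if a ≤ q then 1 else t

section partSeries

variable {R : Type*} [CommSemiring R] (q : ℕ) (t : R)

theorem constantCoeff_partSeries : constantCoeff (partSeries q t) = 0 := by
  simp [partSeries, ← coeff_zero_eq_constantCoeff_apply]

theorem coeff_partSeries_pow (n r : ℕ) :
    coeff n (partSeries q t ^ r) = ∑ c ∈ compositions n r, t ^ #{i | q < c i} := by
  rw [coeff_pow_eq_sum_compositions (constantCoeff_partSeries q t)]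
  refine sum_congr rfl fun c hc => ?_
  have hpos := (mem_compositions.mp hc).1
  have hcoeff (i : Fin r) : coeff (c i) (partSeries q t) = if q < c i then t else 1 := by
    simp only [partSeries, coeff_mk, if_neg (hpos i).ne']
    split_ifs <;> first | rfl | omega
  simp only [hcoeff, prod_ite, prod_const, one_pow, mul_one]

end partSeries

section partSeries

variable {R : Type*} [CommRing R] (q : ℕ) (t : R)

theorem one_sub_X_mul_one_add_partSeries :
    (1 - X) * (1 + partSeries q t) = 1 - C (1 - t) * X ^ (q + 1) := by
  ext (_ | a)
  · simp [partSeries]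
  · rw [sub_mul, one_mul, map_sub, coeff_succ_X_mul, map_sub, coeff_C_mul_X_pow]
    simp only [partSeries, map_add, coeff_one, coeff_mk]
    split_ifs <;> first | contradiction | omega | ring

theorem partSeries_mul_one_sub_X :
    partSeries q t * (1 - X) = X * (1 - C (1 - t) * X ^ q) := by
  linear_combination one_sub_X_mul_one_add_partSeries q t

theorem sum_choose_mul_coeff_neg_partSeries_pow {p : ℕ} (hp : 1 ≤ p) (n : ℕ) :
    ∑ r ∈ Icc 1 n, ((r - 1).choose (p - 1) : R) * coeff n ((-partSeries q t) ^ r) =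
      (-1) ^ p *
        coeff n (X ^ p * ((1 - C (1 - t) * X ^ q) ^ p * invOneSubPowExpand q (1 - t) p)) := by
  have hf : constantCoeff (-partSeries q t) = 0 := by
    rw [map_neg, constantCoeff_partSeries, neg_zero]
  have hW : (1 - -partSeries q t) ^ p * ((1 - X) ^ p * invOneSubPowExpand q (1 - t) p) = 1 := by
    rw [sub_neg_eq_add, ← mul_assoc, ← mul_pow, mul_comm _ (1 - X),
      one_sub_X_mul_one_add_partSeries, one_sub_C_mul_X_pow_pow_mul_invOneSubPowExpand]
  rw [sum_choose_mul_coeff_pow hf hp hW, ← coeff_C_mul, map_pow, map_neg, map_one]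
  congr 1
  rw [neg_pow, ← mul_assoc, mul_assoc _ _ ((1 - X) ^ p), ← mul_pow, partSeries_mul_one_sub_X,
    mul_pow]
  ring

end partSeries

theorem hm_eq_lowCoeffSum (n q r m : ℕ) :
    (hm n q r m : ℤ) = lowCoeffSum m (coeff n (partSeries q Polynomial.X ^ r)) := by
  simp [coeff_partSeries_pow, map_sum, lowCoeffSum_X_pow, hm]

theorem sum_neg_one_pow_mul_choose_mul_hm (n q m : ℕ) {p : ℕ} (hp : 1 ≤ p) :
    ∑ r ∈ Icc 1 n, (-1 : ℤ) ^ r * ((r - 1).choose (p - 1) : ℤ) * (hm n q r m : ℤ) =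
      ∑ i ∈ range (p + 1), if p + q * i ≤ n ∧ q + 1 ∣ n - p - q * i then
        (-1) ^ (p + i) * (p.choose i : ℤ) *
          ((p - 1 + (n - p - q * i) / (q + 1)).choose (p - 1) : ℤ) *
          lowCoeffSum m ((1 - Polynomial.X) ^ (i + (n - p - q * i) / (q + 1)))
      else 0 := by
  have h := congrArg (lowCoeffSum m)
    (sum_choose_mul_coeff_neg_partSeries_pow q (Polynomial.X : Polynomial ℤ) hp n)
  rw [coeff_X_pow_mul_one_sub_pow_mul_invOneSubPowExpand q _ hp, mul_sum, map_sum, map_sum] at h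
  convert h using 2 with r _ i _
  · have hsign : (-1 : (Polynomial ℤ)⟦X⟧) ^ r = C (Polynomial.C ((-1) ^ r)) := by simp
    rw [hm_eq_lowCoeffSum, neg_pow (partSeries q _), hsign, mul_assoc, coeff_C_mul,
      ← Polynomial.C_eq_natCast, ← mul_assoc (Polynomial.C _), ← map_mul, lowCoeffSum_C_mul]
    ring
  · split_ifs
    · rw [← lowCoeffSum_C_mul]
      congr 1
      simp only [map_mul, map_pow, map_neg, map_one, map_natCast]
      ring
    · rw [mul_zero, map_zero]

theorem chZ_natCast (a b : ℕ) : chZ a b = a.choose b := by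
  rw [chZ, Int.toNat_natCast, Int.toNat_natCast]
  split_ifs with h
  · rfl
  · rw [Nat.choose_eq_zero_of_lt (by omega), Nat.cast_zero]

theorem le_of_chZ_ne_zero {a b : ℤ} (h : chZ a b ≠ 0) : 0 ≤ b ∧ b ≤ a := by
  by_contra hab
  exact h (if_neg hab)

section reindex

variable {n q p : ℕ}

theorem sub_sub_mul_div_eq {i M : ℕ} (h : n = p + q * i + (q + 1) * M) :
    (n - p - q * i) / (q + 1) = M := by
  rw [show n - p - q * i = (q + 1) * M by omega, Nat.mul_div_cancel_left _ q.succ_pos]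

theorem add_mem_Icc_of_eq (hq : 1 ≤ q) {i M : ℕ} (h : n = p + q * i + (q + 1) * M) :
    i + M ∈ Icc ((n - p + q) / (q + 1)) ((n - p) / q) := by
  rw [mem_Icc, Nat.div_le_iff_le_mul_add_pred q.succ_pos, Nat.le_div_iff_mul_le (by omega),
    Nat.succ_eq_add_one]
  have : (i + M) * q = q * i + q * M := by ring
  have : (q + 1) * (i + M) = q * i + q * M + i + M := by ring
  have : (q + 1) * M = q * M + M := by ring
  omega

theorem exists_eq_of_chZ_ne_zero {j : ℕ} (h₁ : chZ ((n : ℤ) - q * j - 1) ((p : ℤ) - 1) ≠ 0)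
    (h₂ : chZ (p : ℤ) ((n : ℤ) - q * j - j) ≠ 0) :
    ∃ i M, i ≤ p ∧ i + M = j ∧ n = p + q * i + (q + 1) * M := by
  have h₁ := le_of_chZ_ne_zero h₁
  have h₂ := le_of_chZ_ne_zero h₂
  have : q * j + p ≤ n := by zify; omega
  have : n ≤ p + q * j + j := by zify; omega
  have : q * j + j ≤ n := by zify; omega
  refine ⟨j - (n - p - q * j), n - p - q * j, by omega, by omega, ?_⟩
  have : q * (j - (n - p - q * j)) + q * (n - p - q * j) = q * j := by
    rw [← mul_add, Nat.sub_add_cancel (by omega)]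
  have : (q + 1) * (n - p - q * j) = q * (n - p - q * j) + (n - p - q * j) := by ring
  omega

theorem neg_one_pow_mul_chZ_mul_chZ (hp : 1 ≤ p) {i M : ℕ} (hip : i ≤ p)
    (h : n = p + q * i + (q + 1) * M) :
    (-1 : ℤ) ^ (n + q * (i + M) + (i + M)) * chZ ((n : ℤ) - q * ↑(i + M) - 1) ((p : ℤ) - 1) *
        chZ (p : ℤ) ((n : ℤ) - q * ↑(i + M) - ↑(i + M)) =
      (-1) ^ (p + i) * (p.choose i : ℤ) * ((p - 1 + M).choose (p - 1) : ℤ) := by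
  have hn : n = p + q * i + q * M + M := by rw [h]; ring
  have hsign : n + q * (i + M) + (i + M) = p + i + 2 * (q * i + q * M + M) := by rw [hn]; ring
  have hc₁ : chZ ((n : ℤ) - q * ↑(i + M) - 1) ((p : ℤ) - 1) = (p - 1 + M).choose (p - 1) := by
    rw [← chZ_natCast, hn]
    push_cast [Nat.cast_sub hp]
    ring_nf
  have hc₂ : chZ (p : ℤ) ((n : ℤ) - q * ↑(i + M) - ↑(i + M)) = p.choose i := by
    rw [← Nat.choose_symm hip, ← chZ_natCast, hn]
    push_cast [Nat.cast_sub hip]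
    ring_nf
  rw [hsign, hc₁, hc₂, pow_add _ (p + i), pow_mul, neg_one_sq, one_pow, mul_one]
  ring

/-- The index `i` with `n = p + q i + (q+1) M` corresponds to `j = i + M`. -/
theorem sum_filter_range_eq_sum_Icc_chZ (hq : 1 ≤ q) (hp : 1 ≤ p) (g : ℕ → ℤ) :
    ∑ i ∈ range (p + 1) with p + q * i ≤ n ∧ q + 1 ∣ n - p - q * i,
        (-1) ^ (p + i) * (p.choose i : ℤ) *
          ((p - 1 + (n - p - q * i) / (q + 1)).choose (p - 1) : ℤ) *
          g (i + (n - p - q * i) / (q + 1)) =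
      ∑ j ∈ Icc ((n - p + q) / (q + 1)) ((n - p) / q),
        (-1 : ℤ) ^ (n + q * j + j) * chZ ((n : ℤ) - q * j - 1) ((p : ℤ) - 1) *
          chZ (p : ℤ) ((n : ℤ) - q * j - j) * g j := by
  have hmem {i : ℕ} (hi : i ∈ {i ∈ range (p + 1) | p + q * i ≤ n ∧ q + 1 ∣ n - p - q * i}) :
      i ≤ p ∧ ∃ M, n = p + q * i + (q + 1) * M := by
    obtain ⟨hip, hqi, M, hM⟩ := mem_filter.mp hi
    exact ⟨mem_range_succ_iff.mp hip, M, by omega⟩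
  refine sum_of_injOn (fun i => i + (n - p - q * i) / (q + 1)) ?_ ?_ ?_ ?_
  · intro i₁ hi₁ i₂ hi₂ h
    obtain ⟨-, M₁, hM₁⟩ := hmem hi₁
    obtain ⟨-, M₂, hM₂⟩ := hmem hi₂
    simp only [sub_sub_mul_div_eq hM₁, sub_sub_mul_div_eq hM₂] at h
    have : (q + 1) * (i₁ + M₁) = (q + 1) * (i₂ + M₂) := by rw [h]
    have : (q + 1) * (i₁ + M₁) = q * i₁ + (q + 1) * M₁ + i₁ := by ring
    have : (q + 1) * (i₂ + M₂) = q * i₂ + (q + 1) * M₂ + i₂ := by ring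
    omega
  · intro i hi
    obtain ⟨-, M, hM⟩ := hmem hi
    simpa only [sub_sub_mul_div_eq hM, mem_coe] using add_mem_Icc_of_eq hq hM
  · intro j _ hj
    by_contra hne
    obtain ⟨i, M, hip, rfl, hM⟩ := exists_eq_of_chZ_ne_zero
      (right_ne_zero_of_mul (left_ne_zero_of_mul (left_ne_zero_of_mul hne)))
      (right_ne_zero_of_mul (left_ne_zero_of_mul hne))
    refine hj ⟨i, mem_filter.mpr ⟨mem_range_succ_iff.mpr hip, by omega, ⟨M, by omega⟩⟩, ?_⟩
    simp only [sub_sub_mul_div_eq hM]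
  · intro i hi
    obtain ⟨hip, M, hM⟩ := hmem hi
    simp only [sub_sub_mul_div_eq hM, neg_one_pow_mul_chZ_mul_chZ hp hip hM]

end reindex

theorem stmt_12_general (n q m p : ℕ) (hq : 1 ≤ q) (hp : 1 ≤ p) :
    ∑ r ∈ Finset.Icc 1 n,
        (-1 : ℤ) ^ r * ((r - 1).choose (p - 1) : ℤ) * (hm n q r m : ℤ) =
      ∑ j ∈ Finset.Icc ((n - p + q) / (q + 1)) ((n - p) / q),
        (-1 : ℤ) ^ (n + m + q * j + j) *
          (if j = 0 then (-1 : ℤ) ^ m else (((j - 1).choose m : ℕ) : ℤ)) *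
          chZ ((n : ℤ) - q * j - 1) ((p : ℤ) - 1) *
          chZ (p : ℤ) ((n : ℤ) - q * j - j) := by
  rw [sum_neg_one_pow_mul_choose_mul_hm n q m hp, ← sum_filter]
  refine (sum_filter_range_eq_sum_Icc_chZ (n := n) hq hp
    fun J => lowCoeffSum m ((1 - Polynomial.X) ^ J)).trans (sum_congr rfl fun j _ => ?_)
  have hsq : ((-1 : ℤ) ^ m) * (-1) ^ m = 1 := by rw [← pow_add, Even.neg_one_pow ⟨m, rfl⟩]
  rw [lowCoeffSum_one_sub_X_pow, show n + m + q * j + j = n + q * j + j + m by ring, pow_add]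
  split_ifs
  · linear_combination (-(-1) ^ (n + q * j + j) * chZ ((n : ℤ) - q * j - 1) ((p : ℤ) - 1) *
      chZ (p : ℤ) ((n : ℤ) - q * j - j)) * hsq
  · ring

/-- For `q ≥ 1` and `1 ≤ p ≤ n`,
`∑_{r=1}^{n} (-1)^r C(r-1, p-1) h_m(n, q, r)
  = ∑_{j=⌈(n-p)/(q+1)⌉}^{⌊(n-p)/q⌋} (-1)^{n+m+qj+j} C(j-1, m) C(n-qj-1, p-1) C(p, n-qj-j)`,
with the `j = 0` term (which occurs only when `p = n`) interpreted via the convention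
`(-1)^j C(j-1, m) |_{j=0} = (-1)^m`. -/
theorem stmt_12 (n q m p : ℕ) (hq : 1 ≤ q) (hp : 1 ≤ p) (hpn : p ≤ n) :
    ∑ r ∈ Finset.Icc 1 n,
        (-1 : ℤ) ^ r * ((r - 1).choose (p - 1) : ℤ) * (hm n q r m : ℤ) =
      ∑ j ∈ Finset.Icc ((n - p + q) / (q + 1)) ((n - p) / q),
        (-1 : ℤ) ^ (n + m + q * j + j) *
          (if j = 0 then (-1 : ℤ) ^ m else (((j - 1).choose m : ℕ) : ℤ)) *
          chZ ((n : ℤ) - q * j - 1) ((p : ℤ) - 1) *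
          chZ (p : ℤ) ((n : ℤ) - q * j - j) :=
  stmt_12_general n q m p hq hp
end
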